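/- Let X be the nonsingular projective toric 4-fold (the nonsingular toric Fano 4-fold of type J_2) whose fan Σ has primitive generators G(Σ) = {x_1,…,x_8} and primitive relations x_3 + x_6 = x_7, x_1 + x_2 + x_8 = x_4 + x_5, x_4 + x_5 + x_6 = x_1 + x_2, x_7 + x_8 = x_3, x_6 + x_8 = 0, x_3 + x_4 + x_5 = x_8, x_4 + x_5 + x_7 = 0, x_1 + x_2 + x_3 = 0, x_1 + x_2 + x_7 = x_6. Then X admits no totally nondegenerate finite morphism from an abelian surface. -/

import Mathlib

open Finset

/-- An abelian surface over `ℂ`, recorded abstractly through its group `Div` of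
divisor classes modulo algebraic equivalence, the intersection pairing, and the
effectivity and ampleness predicates.  The listed axioms are standard facts
about divisors on an abelian surface. -/
structure AbelianSurface (Div : Type) [AddCommGroup Div] : Type where
  /-- the intersection pairing `D.E` on the abelian surface -/
  inter : Div →+ Div →+ ℤ
  inter_comm : ∀ D E : Div, inter D E = inter E D
  /-- `Effective D` ↔ `D` is the class of a (nonzero or zero) effective divisor -/
  Effective : Div → Prop
  effective_zero : Effective 0
  effective_add : ∀ {D E : Div}, Effective D → Effective E → Effective (D + E)
  /-- on an abelian surface two effective divisors intersect nonnegatively -/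
  inter_nonneg_of_effective : ∀ {D E : Div}, Effective D → Effective E → 0 ≤ inter D E
  /-- `Ample D` ↔ `D` is the class of an ample divisor -/
  Ample : Div → Prop
  /-- on an abelian surface an effective divisor with positive self-intersection is ample -/
  ample_of_effective_of_sq_pos : ∀ {D : Div}, Effective D → 0 < inter D D → Ample D
  /-- an ample divisor meets every nonzero effective divisor positively -/
  inter_pos_of_ample : ∀ {D E : Div}, Ample D → Effective E → E ≠ 0 → 0 < inter D E
  /-- an ample divisor has positive self-intersection -/
  sq_pos_of_ample : ∀ {D : Div}, Ample D → 0 < inter D D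

/-- A complete nonsingular toric 4-fold `X`, presented by the primitive
generators `x_1, …, x_n ∈ N = ℤ⁴` of its fan `Σ` together with the predicate
`IsCone` recording which subsets of the rays span a cone of `Σ`. -/
structure ToricFourfold (n : ℕ) : Type where
  /-- the set `G(Σ)` of primitive generators `x_1, …, x_n` of `Σ` in `N = ℤ⁴` -/
  gen : Fin n → Fin 4 → ℤ
  gen_injective : Function.Injective gen
  /-- `IsCone S` ↔ the rays `{x_i : i ∈ S}` span a cone of `Σ` -/
  IsCone : Finset (Fin n) → Prop
  isCone_empty : IsCone ∅
  isCone_singleton : ∀ i : Fin n, IsCone {i}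
  isCone_mono : ∀ {S T : Finset (Fin n)}, S ⊆ T → IsCone T → IsCone S
  /-- nonsingularity: the generators of each cone form part of a `ℤ`-basis of `N` -/
  nonsingular : ∀ {S : Finset (Fin n)}, IsCone S →
    ∃ b : Module.Basis (Fin 4) ℤ (Fin 4 → ℤ), ∃ ι : {x // x ∈ S} → Fin 4,
      Function.Injective ι ∧ ∀ i : {x // x ∈ S}, gen i.1 = b (ι i)
  /-- completeness: the cones of `Σ` cover `N_ℚ = ℚ⁴` -/
  complete : ∀ v : Fin 4 → ℚ, ∃ S : Finset (Fin n), IsCone S ∧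
    ∃ c : Fin n → ℚ, (∀ i, 0 ≤ c i) ∧ (∀ i, i ∉ S → c i = 0) ∧
      ∀ k, v k = ∑ i, c i * (gen i k : ℚ)

/-- A primitive collection of the fan of `X` (in the sense of Batyrev):
a minimal subset of the set of rays not spanning a cone. -/
def ToricFourfold.IsPrimitiveCollection {n : ℕ} (X : ToricFourfold n)
    (P : Finset (Fin n)) : Prop :=
  ¬ X.IsCone P ∧ ∀ Q : Finset (Fin n), Q ⊂ P → X.IsCone Q

/-- An (equivariant) isomorphism of complete nonsingular toric 4-folds,
i.e. an isomorphism of the corresponding fans. -/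
def ToricFourfold.Iso {m n : ℕ} (X : ToricFourfold m) (Y : ToricFourfold n) : Prop :=
  ∃ (e : Fin m ≃ Fin n) (g : Matrix (Fin 4) (Fin 4) ℤ), IsUnit g.det ∧
    (∀ i, Y.gen (e i) = g.mulVec (X.gen i)) ∧
    ∀ S : Finset (Fin m), X.IsCone S ↔ Y.IsCone (S.image e)

/-- A projective nonsingular toric 4-fold: a complete nonsingular toric 4-fold
together with the predicate recording which `T_N`-invariant divisors
`∑ i, c i • D i` are ample, and (projectivity) an ample effective such divisor. -/
structure ProjToricFourfold (n : ℕ) : Type extends ToricFourfold n where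
  /-- `IsAmple c` ↔ the `T_N`-invariant divisor `∑ i, c i • D i` is ample on `X` -/
  IsAmple : (Fin n → ℤ) → Prop
  /-- projectivity: there is an ample effective `T_N`-invariant divisor -/
  exists_ample : ∃ c : Fin n → ℤ, (∀ i, 0 ≤ c i) ∧ IsAmple c

/-- `X` is Fano: the anticanonical divisor `∑ i, D i` is ample. -/
def ProjToricFourfold.IsFano {n : ℕ} (X : ProjToricFourfold n) : Prop :=
  X.IsAmple fun _ => 1

/-- A totally nondegenerate finite morphism `φ : A → X` from an abelian surface
`A` to a complete nonsingular toric 4-fold `X`, recorded through the pullbacks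
`C i = φ*(D i)` of the `T_N`-invariant prime divisors `D 1, …, D n` of `X`:
total nondegeneracy says that each `D i` meets `φ(A)`, so that each `C i` is a
nonzero effective divisor on `A`. -/
structure TNDMorphism {n : ℕ} (X : ToricFourfold n) {Div : Type} [AddCommGroup Div]
    (A : AbelianSurface Div) : Type where
  /-- the pullbacks `C i = φ*(D i)` -/
  C : Fin n → Div
  effective : ∀ i, A.Effective (C i)
  /-- total nondegeneracy: `D i ∩ φ(A) ≠ ∅`, so `C i` is a nonzero effective divisor -/
  ne_zero : ∀ i, C i ≠ 0
  /-- if `{x i, x j}` spans no cone of `Σ` then `D i ∩ D j = ∅`, hence the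
  pullbacks have intersection number zero -/
  inter_eq_zero : ∀ {i j : Fin n}, i ≠ j → ¬ X.IsCone {i, j} → A.inter (C i) (C j) = 0
  /-- for every `m ∈ M` the pullback of the principal divisor
  `div 𝐞(m) = ∑ i ⟨m, x i⟩ D i` is (algebraically equivalent to) zero -/
  principal_rel : ∀ m : Fin 4 → ℤ, ∑ i, (∑ k, m k * X.gen i k) • C i = 0

/-- A totally nondegenerate finite morphism to a projective nonsingular toric
4-fold; finiteness of `φ` moreover makes pullbacks of ample divisors ample. -/
structure TNDMorphismProj {n : ℕ} (X : ProjToricFourfold n) {Div : Type} [AddCommGroup Div]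
    (A : AbelianSurface Div) : Type extends TNDMorphism X.toToricFourfold A where
  /-- the pullback of an ample divisor under the finite morphism `φ` is ample -/
  pull_ample : ∀ c : Fin n → ℤ, X.IsAmple c → A.Ample (∑ i, c i • C i)

/-- `X` admits a totally nondegenerate finite morphism from an abelian surface. -/
def ProjToricFourfold.HasTND {n : ℕ} (X : ProjToricFourfold n) : Prop :=
  ∃ (Div : Type) (inst : AddCommGroup Div) (A : @AbelianSurface Div inst),
    Nonempty (@TNDMorphismProj n X Div inst A)

/-- A totally nondegenerate embedding `φ : A ↪ X` of an abelian surface into a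
projective nonsingular toric 4-fold: a totally nondegenerate finite morphism
which is a closed embedding.  Besides the finite-morphism data we record the
intersection-theoretic data available for an embedded surface: the quadruple
intersection numbers `quad i j k l = D i · D j · D k · D l` on `X`, the class
`[A] = ∑ k l, aClass k l • (D k · D l)` of `A` in the Chow group `A²(X)`, the
compatibility `(φ*D i)·(φ*D j) = D i · D j · [A]`, and Van de Ven's relation
`c₂(X)·[A] = [A]²` where `c₂(X) = ∑_{i<j} D i · D j` for a nonsingular complete
toric variety. -/
structure TNDEmbedding {n : ℕ} (X : ProjToricFourfold n) {Div : Type} [AddCommGroup Div]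
    (A : AbelianSurface Div) : Type extends TNDMorphismProj X A where
  /-- the intersection numbers `D i · D j · D k · D l` on `X` -/
  quad : Fin n → Fin n → Fin n → Fin n → ℤ
  /-- the coefficients of the class `[A] ∈ A²(X)` in terms of the classes `D k · D l` -/
  aClass : Fin n → Fin n → ℤ
  /-- for the embedded surface `A ⊂ X`, `(φ*D i)·(φ*D j) = D i · D j · [A]` -/
  inter_eq_quad : ∀ i j : Fin n,
    A.inter (C i) (C j) = ∑ k, ∑ l, aClass k l * quad i j k l
  /-- Van de Ven's relation `c₂(X)·[A] = [A]²` -/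
  van_de_ven : ∑ i, ∑ j ∈ Finset.Ioi i, A.inter (C i) (C j) =
    ∑ k, ∑ l, ∑ k', ∑ l', aClass k l * aClass k' l' * quad k l k' l'

/-- `X` admits a totally nondegenerate embedding of an abelian surface. -/
def ProjToricFourfold.HasTNDEmbedding {n : ℕ} (X : ProjToricFourfold n) : Prop :=
  ∃ (Div : Type) (inst : AddCommGroup Div) (A : @AbelianSurface Div inst),
    Nonempty (@TNDEmbedding n X Div inst A)

/-- `ψ : Y → X` is a 2-blow-up: an equivariant blow-up of `X` along a
`T_N`-invariant subvariety of codimension 2.  On fans this is the star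
subdivision of the fan of `X` at a 2-dimensional cone `{x i, x j}`, the new ray
(indexed last) being generated by `x i + x j`. -/
def IsTwoBlowUp {m n : ℕ} (Y : ProjToricFourfold m) (X : ProjToricFourfold n) : Prop :=
  ∃ h : m = n + 1, ∃ i j : Fin n, i ≠ j ∧ X.IsCone {i, j} ∧
    (∀ k : Fin n, Y.gen (finCongr h.symm k.castSucc) = X.gen k) ∧
    Y.gen (finCongr h.symm (Fin.last n)) = X.gen i + X.gen j ∧
    ∀ S : Finset (Fin n),
      (Y.IsCone (S.image fun k => finCongr h.symm k.castSucc) ↔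
        X.IsCone S ∧ ¬ {i, j} ⊆ S) ∧
      (Y.IsCone (insert (finCongr h.symm (Fin.last n))
          (S.image fun k => finCongr h.symm k.castSucc)) ↔
        ¬ {i, j} ⊆ S ∧ X.IsCone (S ∪ {i, j}))

/-- The fan of `X` splits (after a change of coordinates in `N = ℤ⁴`) as the
product of two 2-dimensional complete fans, i.e. `X ≅ X₁ × X₂` for nonsingular
complete toric surfaces `X₁`, `X₂`.  When `X` is moreover Fano, the two factors
are nonsingular toric del Pezzo surfaces. -/
def ProjToricFourfold.IsProductOfSurfaces {n : ℕ} (X : ProjToricFourfold n) : Prop :=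
  ∃ g : Matrix (Fin 4) (Fin 4) ℤ, IsUnit g.det ∧
    ∃ σ : Fin n → Bool,
      (∀ i, σ i = true → g.mulVec (X.gen i) 2 = 0 ∧ g.mulVec (X.gen i) 3 = 0) ∧
      (∀ i, σ i = false → g.mulVec (X.gen i) 0 = 0 ∧ g.mulVec (X.gen i) 1 = 0) ∧
      ∀ S : Finset (Fin n), X.IsCone S ↔
        (X.IsCone (S.filter fun i => σ i = true) ∧ X.IsCone (S.filter fun i => σ i = false))

/-! The rays `X.gen 0, X.gen 1, X.gen 3, X.gen 4` span a cone, hence form a basis of `N`, and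
the dual basis turns the primitive relations into four linear relations among the pullbacks
`C i = φ*D_i`. Pairing them with `C 5` and `C 7`, and using `C 2 · C 5 = C 5 · C 7 = C 6 · C 7 = 0`
(these pairs span no cone), shows that `C i · C 5` vanishes for `i ∉ {3, 4, 6}` and equals
`C 3 · C 5` otherwise. An ample pullback meets `C 5` positively, so `C 3 · C 5 > 0`; then `C 3 + C 5` is
effective with positive self-intersection, hence ample, yet `(C 3 + C 5) · C 7 = 0`. -/

namespace ToricFourfold

variable {n : ℕ} (X : ToricFourfold n)

lemma isCone_of_forall_isPrimitiveCollection_not_subset {S : Finset (Fin n)}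
    (h : ∀ P, X.IsPrimitiveCollection P → ¬ P ⊆ S) : X.IsCone S := by
  by_contra hS
  obtain ⟨P, hPS, hP⟩ := exists_minimal_le_of_wellFoundedLT (fun P => ¬ X.IsCone P) S hS
  exact h P ⟨hP.prop, fun Q hQ => not_not.mp (hP.not_prop_of_lt hQ)⟩ hPS

lemma exists_dotProduct_gen_eq_ite {S : Finset (Fin n)} (hS : X.IsCone S) {j : Fin n}
    (hj : j ∈ S) : ∃ m : Fin 4 → ℤ, ∀ i ∈ S, m ⬝ᵥ X.gen i = if i = j then 1 else 0 := by
  obtain ⟨b, ι, hι, hb⟩ := X.nonsingular hS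
  let f := b.coord (ι ⟨j, hj⟩)
  let m : Fin 4 → ℤ := fun k => f fun l => if k = l then 1 else 0
  have hm : ∀ v, m ⬝ᵥ v = f v := fun v => by
    rw [LinearMap.pi_apply_eq_sum_univ f v, dotProduct]
    exact Finset.sum_congr rfl fun k _ => mul_comm _ _
  refine ⟨m, fun i hi => ?_⟩
  rw [hm, hb ⟨i, hi⟩, Module.Basis.coord_apply, b.repr_self, Finsupp.single_apply]
  simp only [hι.eq_iff, Subtype.mk.injEq]

end ToricFourfold

namespace AbelianSurface

variable {Div : Type} [AddCommGroup Div] (A : AbelianSurface Div)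

lemma inter_add_inter_eq_of_add_eq {D₁ D₂ E₁ E₂ : Div} (h : D₁ + D₂ = E₁ + E₂) (F : Div) :
    A.inter D₁ F + A.inter D₂ F = A.inter E₁ F + A.inter E₂ F := by
  simpa only [map_add, AddMonoidHom.add_apply] using congrArg (fun D => A.inter D F) h

lemma ample_add_of_inter_pos {D E : Div} (hD : A.Effective D) (hE : A.Effective E)
    (h : 0 < A.inter D E) : A.Ample (D + E) := by
  refine A.ample_of_effective_of_sq_pos (A.effective_add hD hE) ?_
  simp only [map_add, AddMonoidHom.add_apply]
  linarith [A.inter_nonneg_of_effective hD hD, A.inter_nonneg_of_effective hE hE,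
    A.inter_comm E D]

end AbelianSurface

namespace TNDMorphism

variable {n : ℕ} {X : ToricFourfold n} {Div : Type} [AddCommGroup Div] {A : AbelianSurface Div}
  (T : TNDMorphism X A)

lemma inter_nonneg (i j : Fin n) : 0 ≤ A.inter (T.C i) (T.C j) :=
  A.inter_nonneg_of_effective (T.effective i) (T.effective j)

/-- The `j`-th column of `e` is `i ↦ ⟨m, x_i⟩` for the dual basis vector `m` of `x_j`. -/
lemma sum_smul_eq_zero_of_isCone {S : Finset (Fin n)} (hS : X.IsCone S)
    (e : Fin n → Fin n → ℤ) (he : ∀ i, X.gen i = ∑ k ∈ S, e i k • X.gen k)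
    {j : Fin n} (hj : j ∈ S) : ∑ i, e i j • T.C i = 0 := by
  obtain ⟨m, hm⟩ := X.exists_dotProduct_gen_eq_ite hS hj
  have hmgen : ∀ i, m ⬝ᵥ X.gen i = e i j := fun i => by
    rw [he i, dotProduct_sum]
    simp_rw [dotProduct_smul, smul_eq_mul]
    rw [Finset.sum_congr rfl fun k hk => by rw [hm k hk]]
    simp [hj]
  have hrel : ∑ i, (m ⬝ᵥ X.gen i) • T.C i = 0 := T.principal_rel m
  simpa only [hmgen] using hrel

end TNDMorphism

lemma TNDMorphismProj.exists_inter_pos {n : ℕ} {X : ProjToricFourfold n} {Div : Type}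
    [AddCommGroup Div] {A : AbelianSurface Div} (T : TNDMorphismProj X A) (j : Fin n) :
    ∃ i, 0 < A.inter (T.C i) (T.C j) := by
  obtain ⟨c, -, hc⟩ := X.exists_ample
  have hpos := A.inter_pos_of_ample (T.pull_ample c hc) (T.effective j) (T.ne_zero j)
  by_contra! h
  have hzero : ∀ i, A.inter (T.C i) (T.C j) = 0 := fun i =>
    le_antisymm (h i) (T.inter_nonneg i j)
  simp [map_sum, hzero] at hpos

section TypeJ2

variable {Div : Type} [AddCommGroup Div] {A : AbelianSurface Div}

lemma TNDMorphism.typeJ2_relations {X : ToricFourfold 8} (T : TNDMorphism X A)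
    (hcone : X.IsCone {0, 1, 3, 4})
    (h2 : X.gen 0 + X.gen 1 + X.gen 7 = X.gen 3 + X.gen 4)
    (h3 : X.gen 3 + X.gen 4 + X.gen 5 = X.gen 0 + X.gen 1)
    (h7 : X.gen 3 + X.gen 4 + X.gen 6 = 0)
    (h8 : X.gen 0 + X.gen 1 + X.gen 2 = 0) :
    T.C 0 + T.C 5 = T.C 2 + T.C 7 ∧ T.C 1 + T.C 5 = T.C 2 + T.C 7 ∧
      T.C 3 + T.C 7 = T.C 5 + T.C 6 ∧ T.C 4 + T.C 7 = T.C 5 + T.C 6 := by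
  let e : Matrix (Fin 8) (Fin 8) ℤ :=
    !![1, 0, 0, 0, 0, 0, 0, 0;
       0, 1, 0, 0, 0, 0, 0, 0;
       -1, -1, 0, 0, 0, 0, 0, 0;
       0, 0, 0, 1, 0, 0, 0, 0;
       0, 0, 0, 0, 1, 0, 0, 0;
       1, 1, 0, -1, -1, 0, 0, 0;
       0, 0, 0, -1, -1, 0, 0, 0;
       -1, -1, 0, 1, 1, 0, 0, 0]
  have he : ∀ i, X.gen i = ∑ k ∈ {0, 1, 3, 4}, e i k • X.gen k := by
    intro i
    fin_cases i <;> simp only [e, Finset.sum_insert, Finset.mem_insert, Finset.mem_singleton,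
      Finset.sum_singleton, Matrix.of_apply, Matrix.cons_val', Matrix.cons_val,
      Matrix.cons_val_fin_one, Matrix.cons_val_zero, Matrix.cons_val_one, Fin.isValue,
      Fin.reduceEq, Fin.reduceFinMk, or_self, not_false_eq_true, Int.reduceNeg, one_smul,
      zero_smul, neg_smul, add_zero, zero_add]
    · linear_combination h8
    · linear_combination h3
    · linear_combination h7
    · linear_combination h2
  have rel := fun j (hj : j ∈ ({0, 1, 3, 4} : Finset (Fin 8))) =>
    T.sum_smul_eq_zero_of_isCone hcone e he hj
  have r0 := rel 0 (by decide)
  have r1 := rel 1 (by decide)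
  have r3 := rel 3 (by decide)
  have r4 := rel 4 (by decide)
  simp only [e, Fin.sum_univ_eight, Matrix.of_apply, Matrix.cons_val', Matrix.cons_val,
    Matrix.cons_val_fin_one, Matrix.cons_val_zero, Matrix.cons_val_one, Fin.isValue, one_smul,
    zero_smul, neg_smul, add_zero, zero_add, Int.reduceNeg] at r0 r1 r3 r4
  refine ⟨sub_eq_zero.mp ?_, sub_eq_zero.mp ?_, sub_eq_zero.mp ?_, sub_eq_zero.mp ?_⟩
  · rw [← r0]; abel
  · rw [← r1]; abel
  · rw [← r3]; abel
  · rw [← r4]; abel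

lemma TNDMorphismProj.false_of_typeJ2_relations {X : ProjToricFourfold 8}
    (T : TNDMorphismProj X A)
    (h25 : ¬ X.IsCone {2, 5}) (h57 : ¬ X.IsCone {5, 7}) (h67 : ¬ X.IsCone {6, 7})
    (R0 : T.C 0 + T.C 5 = T.C 2 + T.C 7) (R1 : T.C 1 + T.C 5 = T.C 2 + T.C 7)
    (R3 : T.C 3 + T.C 7 = T.C 5 + T.C 6) (R4 : T.C 4 + T.C 7 = T.C 5 + T.C 6) : False := by
  have nn := T.inter_nonneg
  have z25 := T.inter_eq_zero (by decide) h25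
  have z57 := T.inter_eq_zero (by decide) h57
  have z67 := T.inter_eq_zero (by decide) h67
  have z75 := A.inter_comm (T.C 7) (T.C 5)
  have E0 := A.inter_add_inter_eq_of_add_eq R0 (T.C 5)
  have E1 := A.inter_add_inter_eq_of_add_eq R1 (T.C 5)
  have E3 := A.inter_add_inter_eq_of_add_eq R3 (T.C 5)
  have E4 := A.inter_add_inter_eq_of_add_eq R4 (T.C 5)
  have E3' := A.inter_add_inter_eq_of_add_eq R3 (T.C 7)
  obtain ⟨i, hi⟩ := T.exists_inter_pos 5
  have h35 : 0 < A.inter (T.C 3) (T.C 5) := by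
    fin_cases i <;> simp only [Fin.zero_eta, Fin.mk_one, Fin.reduceFinMk, Fin.isValue] at hi <;>
      linarith [nn 0 5, nn 1 5, nn 5 5]
  have h37 : A.inter (T.C 3) (T.C 7) = 0 := by linarith [nn 3 7, nn 7 7]
  have hmeet := A.inter_pos_of_ample
    (A.ample_add_of_inter_pos (T.effective 3) (T.effective 5) h35) (T.effective 7) (T.ne_zero 7)
  simp only [map_add, AddMonoidHom.add_apply, h37, z57] at hmeet
  exact hmeet.false

end TypeJ2

theorem no_tnd_morphism_typeJ2_general (X : ProjToricFourfold 8)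
    (hPC : ∀ P : Finset (Fin 8), X.toToricFourfold.IsPrimitiveCollection P ↔
      (P = {2, 5} ∨ P = {0, 1, 7} ∨ P = {3, 4, 5} ∨ P = {6, 7} ∨ P = {5, 7} ∨
        P = {2, 3, 4} ∨ P = {3, 4, 6} ∨ P = {0, 1, 2} ∨ P = {0, 1, 6}))
    (h2 : X.gen 0 + X.gen 1 + X.gen 7 = X.gen 3 + X.gen 4)
    (h3 : X.gen 3 + X.gen 4 + X.gen 5 = X.gen 0 + X.gen 1)
    (h7 : X.gen 3 + X.gen 4 + X.gen 6 = 0)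
    (h8 : X.gen 0 + X.gen 1 + X.gen 2 = 0) :
    ¬ X.HasTND := by
  rintro ⟨Div, inst, A, ⟨T⟩⟩
  have hcone : X.IsCone {0, 1, 3, 4} :=
    X.isCone_of_forall_isPrimitiveCollection_not_subset fun P hP => by
      rcases (hPC P).mp hP with rfl | rfl | rfl | rfl | rfl | rfl | rfl | rfl | rfl <;> decide
  obtain ⟨R0, R1, R3, R4⟩ := T.typeJ2_relations hcone h2 h3 h7 h8
  exact T.false_of_typeJ2_relations ((hPC {2, 5}).mpr (by simp)).1
    ((hPC {5, 7}).mpr (by simp)).1 ((hPC {6, 7}).mpr (by simp)).1 R0 R1 R3 R4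

/-- **Section 5 (b), type `𝒥₂`.** Let `X` be the nonsingular projective toric
4-fold (the nonsingular toric Fano 4-fold of type `𝒥₂`) whose fan `Σ` has
`G(Σ) = {x_1, …, x_8}` and primitive relations `x_3 + x_6 = x_7`,
`x_1 + x_2 + x_8 = x_4 + x_5`, `x_4 + x_5 + x_6 = x_1 + x_2`, `x_7 + x_8 = x_3`,
`x_6 + x_8 = 0`, `x_3 + x_4 + x_5 = x_8`, `x_4 + x_5 + x_7 = 0`,
`x_1 + x_2 + x_3 = 0`, `x_1 + x_2 + x_7 = x_6`.  Then `X` admits no totally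
nondegenerate finite morphism from an abelian surface.
Rays are indexed from `0`, so `x_k` is `X.gen (k-1)`. -/
theorem no_tnd_morphism_typeJ2 (X : ProjToricFourfold 8)
    (hPC : ∀ P : Finset (Fin 8), X.toToricFourfold.IsPrimitiveCollection P ↔
      (P = {2, 5} ∨ P = {0, 1, 7} ∨ P = {3, 4, 5} ∨ P = {6, 7} ∨ P = {5, 7} ∨
        P = {2, 3, 4} ∨ P = {3, 4, 6} ∨ P = {0, 1, 2} ∨ P = {0, 1, 6}))
    (h1 : X.gen 2 + X.gen 5 = X.gen 6)
    (h2 : X.gen 0 + X.gen 1 + X.gen 7 = X.gen 3 + X.gen 4)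
    (h3 : X.gen 3 + X.gen 4 + X.gen 5 = X.gen 0 + X.gen 1)
    (h4 : X.gen 6 + X.gen 7 = X.gen 2)
    (h5 : X.gen 5 + X.gen 7 = 0)
    (h6 : X.gen 2 + X.gen 3 + X.gen 4 = X.gen 7)
    (h7 : X.gen 3 + X.gen 4 + X.gen 6 = 0)
    (h8 : X.gen 0 + X.gen 1 + X.gen 2 = 0)
    (h9 : X.gen 0 + X.gen 1 + X.gen 6 = X.gen 5) :
    ¬ X.HasTND :=
  no_tnd_morphism_typeJ2_general X hPC h2 h3 h7 h8
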